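/- arXiv:math/0506024 — 3 statements merged into one kernel-verified Lean document; each statement's English description precedes it below -/
import Mathlib

section
/- Let R = k[x_1,...,x_n], I a homogeneous ideal, and d a positive integer. Then for each i and each l ≥ 0, the graded Betti numbers satisfy β_{i,i+d+l}(R/I) = β_{i,i+d+l}(R/I_{≥d}); i.e., rows d and higher of the Betti diagrams of R/I and R/I_{≥d} coincide. -/
open MvPolynomial Classical

/-- The degree-`e` graded piece of `R/I`, where `R = k[x_1,…,x_n]`. -/
noncomputable def gradedPiece (k : Type) [Field k] (n : ℕ)
    (I : Ideal (MvPolynomial (Fin n) k)) (e : ℕ) :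
    Submodule k (MvPolynomial (Fin n) k ⧸ I) :=
  (homogeneousSubmodule (Fin n) k e).map (Ideal.Quotient.mkₐ k I).toLinearMap

/-- The Hilbert function of `R/I`. -/
noncomputable def hilb (k : Type) [Field k] (n : ℕ)
    (I : Ideal (MvPolynomial (Fin n) k)) (t : ℕ) : ℕ :=
  Module.finrank k (gradedPiece k n I t)

/-- `I` is a homogeneous ideal. -/
def IsHomog {k : Type} [Field k] {n : ℕ} (I : Ideal (MvPolynomial (Fin n) k)) : Prop :=
  ∃ S : Set (MvPolynomial (Fin n) k),
    (∀ f ∈ S, ∃ e, f.IsHomogeneous e) ∧ I = Ideal.span S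

/-- The Koszul differential on `⊕_{S ⊆ {x_1,…,x_n}} R/I`  (the Koszul complex
on the variables tensored with `R/I`, with all homological pieces bundled together). -/
noncomputable def koszulD (k : Type) [Field k] (n : ℕ)
    (I : Ideal (MvPolynomial (Fin n) k)) :
    (Finset (Fin n) → (MvPolynomial (Fin n) k ⧸ I)) →ₗ[k]
      (Finset (Fin n) → (MvPolynomial (Fin n) k ⧸ I)) :=
  LinearMap.pi fun S =>
    ∑ t ∈ Sᶜ, ((-1 : ℤ) ^ (S.filter (fun u => u < t)).card) •
      ((LinearMap.mulLeft k (Ideal.Quotient.mk I (X t))).comp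
        (LinearMap.proj (insert t S)))

/-- The internal-degree-`j`, homological-degree-`i` piece of the Koszul complex of `R/I`:
functions supported on `i`-element subsets, with values in the graded piece of degree `j - i`. -/
noncomputable def koszulPiece (k : Type) [Field k] (n : ℕ)
    (I : Ideal (MvPolynomial (Fin n) k)) (i j : ℕ) :
    Submodule k (Finset (Fin n) → (MvPolynomial (Fin n) k ⧸ I)) :=
  Submodule.pi Set.univ fun S =>
    if S.card = i ∧ i ≤ j then gradedPiece k n I (j - i) else ⊥

/-- The graded Betti number `β_{ij}(R/I) = dim_k Tor_i(R/I, k)_j`, computed as the dimension of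
the homology of the Koszul complex of `R/I` in homological degree `i` and internal degree `j`. -/
noncomputable def betti (k : Type) [Field k] (n : ℕ)
    (I : Ideal (MvPolynomial (Fin n) k)) (i j : ℕ) : ℕ :=
  Module.finrank k ↥(koszulPiece k n I i j ⊓ LinearMap.ker (koszulD k n I))
    - Module.finrank k ↥((koszulPiece k n I (i + 1) j).map (koszulD k n I))

/-- `M_i(R/I)`, the maximal shift at homological step `i`. -/
noncomputable def maxShift (k : Type) [Field k] (n : ℕ)
    (I : Ideal (MvPolynomial (Fin n) k)) (i : ℕ) : ℕ :=
  sSup {j | betti k n I i j ≠ 0}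

/-- `m_i(R/I)`, the minimal shift at homological step `i`. -/
noncomputable def minShift (k : Type) [Field k] (n : ℕ)
    (I : Ideal (MvPolynomial (Fin n) k)) (i : ℕ) : ℕ :=
  sInf {j | betti k n I i j ≠ 0}

/-- The truncation `I_{≥ d}`: the ideal generated by all homogeneous elements of `I` of
degree at least `d`. -/
noncomputable def trunc {k : Type} [Field k] {n : ℕ} (I : Ideal (MvPolynomial (Fin n) k)) (d : ℕ) :
    Ideal (MvPolynomial (Fin n) k) :=
  Ideal.span {f | f ∈ I ∧ ∃ e, d ≤ e ∧ f.IsHomogeneous e}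

/-- `e` is the multiplicity (degree) of `R/I`: the total vector-space dimension in the
finite-length (Artinian) case, and the normalized leading coefficient of the Hilbert
polynomial otherwise. -/
noncomputable def IsMultiplicity (k : Type) [Field k] (n : ℕ)
    (I : Ideal (MvPolynomial (Fin n) k)) (e : ℚ) : Prop :=
  (∃ N, (∀ t, N ≤ t → hilb k n I t = 0) ∧
      e = ∑ t ∈ Finset.range N, (hilb k n I t : ℚ)) ∨
  ((¬ ∃ N, ∀ t, N ≤ t → hilb k n I t = 0) ∧
    ∃ P : Polynomial ℚ, P ≠ 0 ∧ (∃ N : ℕ, ∀ t : ℕ, N ≤ t → P.eval (t : ℚ) = (hilb k n I t : ℚ)) ∧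
      e = P.leadingCoeff * (P.natDegree).factorial)

/-- The multiplicity (= `dim_k R/I`) of an Artinian quotient `R/I`. -/
noncomputable def amult (k : Type) [Field k] (n : ℕ)
    (I : Ideal (MvPolynomial (Fin n) k)) : ℕ :=
  ∑ᶠ t : ℕ, hilb k n I t

/-! The quotient map `R/J → R/I` for `J = I_{≥d} ⊆ I` induces a map of Koszul
complexes that is surjective in every bidegree and injective on the pieces of internal degree
`≥ d`, where `R/J` and `R/I` agree. Both the cycles and the boundaries computing `β_{i,j}` with
`j ≥ i + d` live in such pieces, so they map isomorphically. -/

section LinearAlgebra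

variable {K M N : Type} [Field K] [AddCommGroup M] [AddCommGroup N] [Module K M] [Module K N]

theorem finrank_map_eq_of_disjoint_ker {f : M →ₗ[K] N} {p : Submodule K M}
    (h : Disjoint p (LinearMap.ker f)) :
    Module.finrank K (p.map f) = Module.finrank K p := by
  rw [← LinearMap.range_domRestrict]
  exact LinearMap.finrank_range_of_inj (LinearMap.injective_domRestrict_iff.2 h)

theorem map_inf_ker_of_comp_eq {Φ : M →ₗ[K] N} {D : M →ₗ[K] M} {D' : N →ₗ[K] N}
    (hcomm : D' ∘ₗ Φ = Φ ∘ₗ D) {P P' : Submodule K M} (hP : P.map D ≤ P')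
    (hinj : Disjoint P' (LinearMap.ker Φ)) :
    (P ⊓ LinearMap.ker D).map Φ = P.map Φ ⊓ LinearMap.ker D' := by
  refine le_antisymm (Submodule.map_inf_le Φ |>.trans (inf_le_inf_left _ ?_)) ?_
  · rintro _ ⟨x, hx, rfl⟩
    rw [SetLike.mem_coe, LinearMap.mem_ker] at hx
    rw [LinearMap.mem_ker, ← LinearMap.comp_apply, hcomm, LinearMap.comp_apply, hx, map_zero]
  · rintro _ ⟨⟨x, hx, rfl⟩, hy⟩
    have hDx : D x ∈ P' := hP (Submodule.mem_map_of_mem hx)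
    have hΦDx : Φ (D x) = 0 := by
      rw [← LinearMap.comp_apply, ← hcomm, LinearMap.comp_apply]
      exact hy
    exact Submodule.mem_map_of_mem ⟨hx, LinearMap.disjoint_ker.1 hinj _ hDx hΦDx⟩

theorem map_compLeft_pi_univ {ι : Type} (f : M →ₗ[K] N) (p : ι → Submodule K M) :
    (Submodule.pi Set.univ p).map (f.compLeft ι) = Submodule.pi Set.univ fun i => (p i).map f := by
  refine le_antisymm ?_ fun y hy => ?_
  · rintro _ ⟨x, hx, rfl⟩ i -
    exact Submodule.mem_map_of_mem (hx i (Set.mem_univ i))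
  · choose x hx hxy using fun i => hy i (Set.mem_univ i)
    exact ⟨x, fun i _ => hx i, funext hxy⟩

end LinearAlgebra

section Koszul

variable {k : Type} [Field k] {n : ℕ} {I J : Ideal (MvPolynomial (Fin n) k)}

theorem trunc_le (I : Ideal (MvPolynomial (Fin n) k)) (d : ℕ) : trunc I d ≤ I :=
  Ideal.span_le.2 fun _ hf => hf.1

theorem map_factorₐ_gradedPiece (h : J ≤ I) (e : ℕ) :
    (gradedPiece k n J e).map (Ideal.Quotient.factorₐ k h).toLinearMap = gradedPiece k n I e := by
  rw [gradedPiece, gradedPiece, ← Submodule.map_comp]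
  rfl

theorem disjoint_gradedPiece_ker_factorₐ (h : J ≤ I) {e : ℕ}
    (hmem : ∀ f ∈ I, f.IsHomogeneous e → f ∈ J) :
    Disjoint (gradedPiece k n J e) (LinearMap.ker (Ideal.Quotient.factorₐ k h).toLinearMap) := by
  refine LinearMap.disjoint_ker.2 ?_
  rintro _ ⟨f, hf, rfl⟩ hf0
  have hfI : f ∈ I := Ideal.Quotient.eq_zero_iff_mem.1 hf0
  exact Ideal.Quotient.eq_zero_iff_mem.2 (hmem f hfI ((mem_homogeneousSubmodule _ _).1 hf))

theorem mk_X_mul_mem_gradedPiece {e : ℕ} (t : Fin n) {x : MvPolynomial (Fin n) k ⧸ J}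
    (hx : x ∈ gradedPiece k n J e) :
    Ideal.Quotient.mk J (X t) * x ∈ gradedPiece k n J (e + 1) := by
  obtain ⟨f, hf, rfl⟩ := hx
  refine ⟨X t * f, ?_, rfl⟩
  rw [SetLike.mem_coe, mem_homogeneousSubmodule, add_comm]
  exact (isHomogeneous_X k t).mul ((mem_homogeneousSubmodule _ _).1 hf)

theorem koszulD_apply (x : Finset (Fin n) → MvPolynomial (Fin n) k ⧸ J) (S : Finset (Fin n)) :
    koszulD k n J x S = ∑ t ∈ Sᶜ, ((-1 : ℤ) ^ (S.filter (fun u => u < t)).card) •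
      (Ideal.Quotient.mk J (X t) * x (insert t S)) := by
  simp [koszulD]

noncomputable abbrev koszulFactor (h : J ≤ I) :
    (Finset (Fin n) → MvPolynomial (Fin n) k ⧸ J) →ₗ[k]
      (Finset (Fin n) → MvPolynomial (Fin n) k ⧸ I) :=
  (Ideal.Quotient.factorₐ k h).toLinearMap.compLeft (Finset (Fin n))

theorem koszulD_comp_koszulFactor (h : J ≤ I) :
    koszulD k n I ∘ₗ koszulFactor h = koszulFactor h ∘ₗ koszulD k n J := by
  ext x S
  simp only [LinearMap.comp_apply, LinearMap.compLeft_apply, Function.comp_apply, koszulD_apply,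
    AlgHom.toLinearMap_apply, map_sum, map_zsmul, map_mul, Ideal.Quotient.factorₐ_apply_mk]

-- For `i = 0` the image is zero, so the truncation `0 - 1 = 0` is harmless.
theorem map_koszulD_koszulPiece_le (i j : ℕ) :
    (koszulPiece k n J i j).map (koszulD k n J) ≤ koszulPiece k n J (i - 1) j := by
  refine Submodule.map_le_iff_le_comap.2 fun x hx => ?_
  rw [Submodule.mem_comap, koszulPiece, Submodule.mem_pi]
  rw [koszulPiece, Submodule.mem_pi] at hx
  intro S _
  rw [koszulD_apply]
  refine Submodule.sum_mem _ fun t ht => ?_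
  have hxT := hx (insert t S) (Set.mem_univ _)
  have hcard : (insert t S).card = S.card + 1 :=
    Finset.card_insert_of_notMem (Finset.mem_compl.1 ht)
  by_cases hc : (insert t S).card = i ∧ i ≤ j
  · rw [if_pos hc] at hxT
    rw [if_pos (by omega), show j - (i - 1) = j - i + 1 by omega]
    exact Submodule.smul_of_tower_mem _ _ (mk_X_mul_mem_gradedPiece t hxT)
  · rw [if_neg hc, Submodule.mem_bot] at hxT
    simp [hxT]

theorem map_koszulFactor_koszulPiece (h : J ≤ I) (i j : ℕ) :
    (koszulPiece k n J i j).map (koszulFactor h) = koszulPiece k n I i j := by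
  rw [koszulPiece, koszulPiece, map_compLeft_pi_univ]
  congr 1
  funext S
  split_ifs
  · exact map_factorₐ_gradedPiece h (j - i)
  · exact Submodule.map_bot _

theorem disjoint_koszulPiece_ker_koszulFactor (h : J ≤ I) {i j : ℕ}
    (hmem : ∀ f ∈ I, f.IsHomogeneous (j - i) → f ∈ J) :
    Disjoint (koszulPiece k n J i j) (LinearMap.ker (koszulFactor h)) := by
  refine LinearMap.disjoint_ker.2 fun x hx hx0 => funext fun S => ?_
  rw [koszulPiece, Submodule.mem_pi] at hx
  have hxS := hx S (Set.mem_univ _)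
  split_ifs at hxS
  · exact LinearMap.disjoint_ker.1 (disjoint_gradedPiece_ker_factorₐ h hmem) _ hxS
      (congrFun hx0 S)
  · exact (Submodule.mem_bot _).1 hxS

theorem betti_eq_of_le (h : J ≤ I) {i j : ℕ}
    (hmem : ∀ e, j - i ≤ e → ∀ f ∈ I, f.IsHomogeneous e → f ∈ J) :
    betti k n I i j = betti k n J i j := by
  have hinj : ∀ i', i' ≤ i → Disjoint (koszulPiece k n J i' j) (LinearMap.ker (koszulFactor h)) :=
    fun i' hi' => disjoint_koszulPiece_ker_koszulFactor h (hmem _ (by omega))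
  have hcycles := map_inf_ker_of_comp_eq (koszulD_comp_koszulFactor h)
    (map_koszulD_koszulPiece_le i j) (hinj _ (Nat.sub_le i 1))
  have hboundaries : ((koszulPiece k n J (i + 1) j).map (koszulD k n J)).map (koszulFactor h)
      = (koszulPiece k n I (i + 1) j).map (koszulD k n I) := by
    rw [← Submodule.map_comp, ← koszulD_comp_koszulFactor, Submodule.map_comp,
      map_koszulFactor_koszulPiece]
  rw [map_koszulFactor_koszulPiece] at hcycles
  rw [betti, betti, ← hcycles, ← hboundaries,
    finrank_map_eq_of_disjoint_ker ((hinj i le_rfl).mono_left inf_le_left),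
    finrank_map_eq_of_disjoint_ker ((hinj i le_rfl).mono_left
      ((map_koszulD_koszulPiece_le (i + 1) j).trans_eq (by rw [Nat.add_sub_cancel])))]

end Koszul

theorem stmt2_general (k : Type) [Field k] (n : ℕ) (I : Ideal (MvPolynomial (Fin n) k))
    (d : ℕ) :
    ∀ (i l : ℕ), betti k n I i (i + d + l) = betti k n (trunc I d) i (i + d + l) :=
  fun _ _ => betti_eq_of_le (trunc_le I d) fun e he f hf hhom =>
    Ideal.subset_span ⟨hf, e, by omega, hhom⟩

/-- Lemma 4.3. For a homogeneous ideal `I ⊆ k[x_1,…,x_n]` and `d ≥ 1`,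
the graded Betti numbers satisfy `β_{i,i+d+l}(R/I) = β_{i,i+d+l}(R/I_{≥d})` for all `i` and
all `l ≥ 0`: rows `d` and higher of the two Betti diagrams coincide. -/
theorem stmt2 (k : Type) [Field k] (n : ℕ) (I : Ideal (MvPolynomial (Fin n) k))
    (hI : IsHomog I) (d : ℕ) (hd : 1 ≤ d) :
    ∀ (i l : ℕ), betti k n I i (i + d + l) = betti k n (trunc I d) i (i + d + l) :=
  stmt2_general k n I d
end

section
/- Let S = k[a,b,c] and suppose I = (f_1, f_2, f_3, f_4) is generated by four forms of degree 5, with f_1, f_2, f_3 a regular sequence, and suppose S/I has Hilbert function (1,3,6,10,15,17,17,17,15,10,0,0,...). Let J = (f_1,f_2,f_3) : (f_4). Then the short exact sequence 0 → (S/J)(−5) → S/(f_1,f_2,f_3) → S/I → 0 forces S/J to have Hilbert function (1,2,1,0,0,6,3,1), which is impossible (a Hilbert function of a standard graded algebra that vanishes in some degree must vanish in all higher degrees). Hence no such ideal I exists. -/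
open MvPolynomial Classical

/-- `f₀, f₁, f₂` form a regular sequence on `S`. -/
def RegSeq3 {k : Type} [Field k] (f₀ f₁ f₂ : MvPolynomial (Fin 3) k) : Prop :=
  f₀ ≠ 0 ∧
    (∀ g, f₁ * g ∈ Ideal.span {f₀} → g ∈ Ideal.span {f₀}) ∧
    (∀ g, f₂ * g ∈ Ideal.span ({f₀, f₁} : Set (MvPolynomial (Fin 3) k)) →
      g ∈ Ideal.span ({f₀, f₁} : Set (MvPolynomial (Fin 3) k)))

/-!
Write `C = (f₀, f₁, f₂)` and `J = C : f₃`. For a homogeneous ideal `A` and a form `f` of degree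
`d`, the degree-`(s + d)` part of `A + (f)` is `A_{s+d} + f·S_s`, and the two summands meet in
`f·(A : f)_s`. Counting dimensions gives `H(S/(A : f), s) + H(S/(A + (f)), s + d) = H(S/A, s + d)`,
the exact sequence `0 → (S/(A : f))(-d) → S/A → S/(A + (f)) → 0` on Hilbert functions.
Along the regular sequence `A : f = A`, which yields `H(S/C, 8) = 15` and `H(S/C, 10) = 6`;
for `f₃` it then forces `H(S/J, 3) = 0` and `H(S/J, 5) = 6`. But `H(S/J, 3) = 0` means `S_3 ⊆ J`,
hence `S_5 = S_3 · S_2 ⊆ J`.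
-/

attribute [local instance] MvPolynomial.gradedAlgebra

theorem colon_singleton_eq_self {S : Type*} [CommSemiring S] {A : Ideal S} {f : S}
    (hreg : ∀ g, f * g ∈ A → g ∈ A) : A.colon {f} = A :=
  le_antisymm (fun g hg => hreg g (by simpa [mul_comm] using Submodule.mem_colon_singleton.mp hg))
    Ideal.le_colon

section CommSemiring

variable {R : Type*} [CommSemiring R] {σ : Type*}

theorem homogeneousComponent_mul_of_isHomogeneous {f : MvPolynomial σ R} {d : ℕ}
    (hf : f.IsHomogeneous d) (g : MvPolynomial σ R) (t : ℕ) :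
    homogeneousComponent t (g * f) = if d ≤ t then homogeneousComponent (t - d) g * f else 0 := by
  have := DirectSum.coe_decompose_mul_of_right_mem (homogeneousSubmodule σ R) t hf (a := g)
  simpa only [DirectSum.decompose, Equiv.coe_fn_mk, decomposition.decompose'_apply] using this

theorem isHomogeneous_span_singleton {f : MvPolynomial σ R} {d : ℕ} (hf : f.IsHomogeneous d) :
    (Ideal.span {f}).IsHomogeneous (homogeneousSubmodule σ R) :=
  Ideal.homogeneous_span _ _ fun _ hg => ⟨d, (Set.mem_singleton_iff.mp hg).symm ▸ hf⟩

noncomputable def degreePart (A : Ideal (MvPolynomial σ R)) (t : ℕ) :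
    Submodule R (MvPolynomial σ R) :=
  A.restrictScalars R ⊓ homogeneousSubmodule σ R t

theorem degreePart_mono {A B : Ideal (MvPolynomial σ R)} (h : A ≤ B) (t : ℕ) :
    degreePart A t ≤ degreePart B t :=
  inf_le_inf_right _ (Submodule.restrictScalars_mono R h)

theorem degreePart_sup {A B : Ideal (MvPolynomial σ R)}
    (hA : A.IsHomogeneous (homogeneousSubmodule σ R))
    (hB : B.IsHomogeneous (homogeneousSubmodule σ R)) (t : ℕ) :
    degreePart (A ⊔ B) t = degreePart A t ⊔ degreePart B t := by
  refine le_antisymm ?_ (sup_le (degreePart_mono le_sup_left t) (degreePart_mono le_sup_right t))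
  rintro p ⟨hp, hpt⟩
  obtain ⟨a, ha, b, hb, rfl⟩ := Submodule.mem_sup.mp hp
  rw [← homogeneousComponent_eq_self hpt, map_add]
  exact Submodule.add_mem_sup
    ⟨homogeneousComponent_mem_of_mem hA ha t, homogeneousComponent_mem t a⟩
    ⟨homogeneousComponent_mem_of_mem hB hb t, homogeneousComponent_mem t b⟩

theorem degreePart_span_singleton {f : MvPolynomial σ R} {d : ℕ} (hf : f.IsHomogeneous d)
    (t : ℕ) :
    degreePart (Ideal.span {f}) (t + d) =
      (homogeneousSubmodule σ R t).map (LinearMap.mulLeft R f) := by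
  refine le_antisymm ?_ ?_
  · rintro p ⟨hp, hpt⟩
    obtain ⟨g, rfl⟩ := Ideal.mem_span_singleton'.mp hp
    rw [← homogeneousComponent_eq_self hpt, homogeneousComponent_mul_of_isHomogeneous hf,
      if_pos (Nat.le_add_left d t), Nat.add_sub_cancel]
    exact ⟨_, homogeneousComponent_mem t g, mul_comm _ _⟩
  · rintro _ ⟨g, hg, rfl⟩
    exact ⟨Ideal.mul_mem_right g _ (Ideal.mem_span_singleton_self f), add_comm d t ▸ hf.mul hg⟩

theorem degreePart_span_singleton_of_lt {f : MvPolynomial σ R} {d t : ℕ}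
    (hf : f.IsHomogeneous d) (ht : t < d) : degreePart (Ideal.span {f}) t = ⊥ := by
  refine eq_bot_iff.mpr fun p ⟨hp, hpt⟩ => ?_
  obtain ⟨g, rfl⟩ := Ideal.mem_span_singleton'.mp hp
  rw [← homogeneousComponent_eq_self hpt, homogeneousComponent_mul_of_isHomogeneous hf,
    if_neg (Nat.not_le.mpr ht)]
  exact zero_mem _

theorem degreePart_inf_map_mulLeft (A : Ideal (MvPolynomial σ R)) {f : MvPolynomial σ R}
    {d : ℕ} (hf : f.IsHomogeneous d) (t : ℕ) :
    degreePart A (t + d) ⊓ (homogeneousSubmodule σ R t).map (LinearMap.mulLeft R f) =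
      (degreePart (A.colon {f}) t).map (LinearMap.mulLeft R f) := by
  refine le_antisymm ?_ ?_
  · rintro _ ⟨⟨hA, -⟩, g, hg, rfl⟩
    exact ⟨g, ⟨Submodule.mem_colon_singleton.mpr (by simpa [mul_comm] using hA), hg⟩, rfl⟩
  · rintro _ ⟨g, ⟨hgA, hg⟩, rfl⟩
    refine ⟨⟨?_, add_comm d t ▸ hf.mul hg⟩, g, hg, rfl⟩
    simpa [mul_comm] using Submodule.mem_colon_singleton.mp hgA

end CommSemiring

section Field

variable {k : Type} [Field k] {σ : Type*}

instance [Finite σ] (t : ℕ) : Module.Finite k (homogeneousSubmodule σ k t) :=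
  Module.Finite.iff_fg.mpr (homogeneousSubmodule_fg σ k t)

instance [Finite σ] (A : Ideal (MvPolynomial σ k)) (t : ℕ) : Module.Finite k (degreePart A t) :=
  Submodule.finiteDimensional_of_le inf_le_right

theorem finrank_homogeneousSubmodule [Fintype σ] (t : ℕ) :
    Module.finrank k (homogeneousSubmodule σ k t) = (Fintype.card σ + t - 1).choose t := by
  have hdeg : {d : σ →₀ ℕ | d.degree = t} = ↑((Finset.univ : Finset σ).finsuppAntidiag t) := by
    ext d
    simp [Finset.mem_finsuppAntidiag, Finsupp.degree_eq_sum]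
  rw [((LinearEquiv.ofEq _ _ (homogeneousSubmodule_eq_finsupp_supported σ k t)).trans
    (AddMonoidAlgebra.supportedEquivFinsupp _)).finrank_eq, hdeg, Module.finrank_finsupp_self]
  simp [Finset.card_finsuppAntidiag_nat_eq_choose]

end Field

section HilbertFunction

variable {k : Type} [Field k] {n : ℕ}

instance (A : Ideal (MvPolynomial (Fin n) k)) (t : ℕ) : Module.Finite k (gradedPiece k n A t) :=
  Module.Finite.map _ _

theorem hilb_add_finrank_degreePart (A : Ideal (MvPolynomial (Fin n) k)) (t : ℕ) :
    hilb k n A t + Module.finrank k (degreePart A t) =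
      Module.finrank k (homogeneousSubmodule (Fin n) k t) := by
  let φ := (Ideal.Quotient.mkₐ k A).toLinearMap.domRestrict (homogeneousSubmodule (Fin n) k t)
  have hker : LinearMap.ker φ =
      (degreePart A t).comap (homogeneousSubmodule (Fin n) k t).subtype := by
    ext p
    simp [φ, degreePart, Ideal.Quotient.eq_zero_iff_mem]
  rw [← LinearMap.finrank_range_add_finrank_ker φ, hker, hilb, gradedPiece,
    LinearMap.range_domRestrict]
  exact congrArg _ (Submodule.comapSubtypeEquivOfLe inf_le_right).finrank_eq.symm

theorem hilb_bot (t : ℕ) : hilb k n ⊥ t = (n + t - 1).choose t := by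
  have h := hilb_add_finrank_degreePart (⊥ : Ideal (MvPolynomial (Fin n) k)) t
  rwa [degreePart, Submodule.restrictScalars_bot, bot_inf_eq, finrank_bot, add_zero,
    finrank_homogeneousSubmodule, Fintype.card_fin] at h

theorem hilb_eq_zero_iff (A : Ideal (MvPolynomial (Fin n) k)) (t : ℕ) :
    hilb k n A t = 0 ↔ homogeneousSubmodule (Fin n) k t ≤ A.restrictScalars k := by
  have hker : LinearMap.ker (Ideal.Quotient.mkₐ k A).toLinearMap = A.restrictScalars k := by
    ext
    simp [Ideal.Quotient.eq_zero_iff_mem]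
  rw [hilb, Submodule.finrank_eq_zero, gradedPiece, ← LinearMap.le_ker_iff_map, hker]

theorem hilb_top (t : ℕ) : hilb k n ⊤ t = 0 := by
  rw [hilb_eq_zero_iff, Submodule.restrictScalars_top]
  exact le_top

theorem hilb_eq_zero_of_le {A : Ideal (MvPolynomial (Fin n) k)} {t u : ℕ}
    (h : hilb k n A t = 0) (htu : t ≤ u) : hilb k n A u = 0 := by
  rw [hilb_eq_zero_iff] at h ⊢
  obtain ⟨e, rfl⟩ := Nat.exists_eq_add_of_le htu
  rw [← homogeneousSubmodule_one_pow, pow_add, homogeneousSubmodule_one_pow,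
    homogeneousSubmodule_one_pow]
  exact Submodule.mul_le.mpr fun p hp q _ => A.mul_mem_right q (h hp)

theorem hilb_colon_add_hilb_sup {A : Ideal (MvPolynomial (Fin n) k)}
    (hA : A.IsHomogeneous (homogeneousSubmodule (Fin n) k)) {f : MvPolynomial (Fin n) k} {d : ℕ}
    (hf : f.IsHomogeneous d) (s : ℕ) :
    hilb k n (A.colon {f}) s + hilb k n (A ⊔ Ideal.span {f}) (s + d) = hilb k n A (s + d) := by
  rcases eq_or_ne f 0 with rfl | hf₀
  · rw [Submodule.colon_singleton_zero, hilb_top, Ideal.span_singleton_eq_bot.mpr rfl,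
      sup_bot_eq, zero_add]
  have hmul : Function.Injective (LinearMap.mulLeft k f) := mul_right_injective₀ hf₀
  have key := Submodule.finrank_sup_add_finrank_inf_eq (degreePart A (s + d))
    (degreePart (Ideal.span {f}) (s + d))
  rw [← degreePart_sup hA (isHomogeneous_span_singleton hf), degreePart_span_singleton hf,
    degreePart_inf_map_mulLeft A hf, ← (Submodule.equivMapOfInjective _ hmul _).finrank_eq,
    ← (Submodule.equivMapOfInjective _ hmul _).finrank_eq] at key
  have := hilb_add_finrank_degreePart A (s + d)
  have := hilb_add_finrank_degreePart (A ⊔ Ideal.span {f}) (s + d)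
  have := hilb_add_finrank_degreePart (A.colon {f}) s
  omega

theorem hilb_sup_span_singleton_add_hilb {A : Ideal (MvPolynomial (Fin n) k)}
    (hA : A.IsHomogeneous (homogeneousSubmodule (Fin n) k)) {f : MvPolynomial (Fin n) k} {d : ℕ}
    (hf : f.IsHomogeneous d) (hreg : ∀ g, f * g ∈ A → g ∈ A) (s : ℕ) :
    hilb k n (A ⊔ Ideal.span {f}) (s + d) + hilb k n A s = hilb k n A (s + d) := by
  rw [← hilb_colon_add_hilb_sup hA hf s, colon_singleton_eq_self hreg, add_comm]

theorem hilb_sup_span_singleton_of_lt {A : Ideal (MvPolynomial (Fin n) k)}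
    (hA : A.IsHomogeneous (homogeneousSubmodule (Fin n) k)) {f : MvPolynomial (Fin n) k}
    {d t : ℕ} (hf : f.IsHomogeneous d) (ht : t < d) :
    hilb k n (A ⊔ Ideal.span {f}) t = hilb k n A t := by
  have h := hilb_add_finrank_degreePart (A ⊔ Ideal.span {f}) t
  rw [degreePart_sup hA (isHomogeneous_span_singleton hf), degreePart_span_singleton_of_lt hf ht,
    sup_bot_eq, ← hilb_add_finrank_degreePart A t] at h
  exact Nat.add_right_cancel h

theorem hilb_span_regSeq3_of_quintics {f₀ f₁ f₂ : MvPolynomial (Fin 3) k}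
    (h₀ : f₀.IsHomogeneous 5) (h₁ : f₁.IsHomogeneous 5) (h₂ : f₂.IsHomogeneous 5)
    (hreg : RegSeq3 f₀ f₁ f₂) :
    hilb k 3 (Ideal.span {f₀, f₁, f₂}) 8 = 15 ∧ hilb k 3 (Ideal.span {f₀, f₁, f₂}) 10 = 6 := by
  obtain ⟨hne, hreg₁, hreg₂⟩ := hreg
  have hB₂ : Ideal.span {f₀, f₁} = Ideal.span {f₀} ⊔ Ideal.span {f₁} := Ideal.span_insert _ _
  have hC : Ideal.span {f₀, f₁, f₂} = Ideal.span {f₀, f₁} ⊔ Ideal.span {f₂} := by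
    simp only [Ideal.span_insert, sup_assoc]
  have hom₀ := Ideal.IsHomogeneous.bot (homogeneousSubmodule (Fin 3) k)
  have hom₁ := isHomogeneous_span_singleton h₀
  have hom₂ : (Ideal.span {f₀, f₁}).IsHomogeneous (homogeneousSubmodule (Fin 3) k) :=
    hB₂ ▸ hom₁.sup (isHomogeneous_span_singleton h₁)
  have e₁ (s : ℕ) := by
    simpa only [bot_sup_eq] using
      hilb_sup_span_singleton_add_hilb hom₀ h₀ (fun g hg => by simpa [hne] using hg) s
  have e₂ (s : ℕ) := hB₂ ▸ hilb_sup_span_singleton_add_hilb hom₁ h₁ hreg₁ s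
  have e₃ (s : ℕ) := hC ▸ hilb_sup_span_singleton_add_hilb hom₂ h₂ hreg₂ s
  have l₁ {t : ℕ} (ht : t < 5) := by
    simpa only [bot_sup_eq] using hilb_sup_span_singleton_of_lt hom₀ h₀ ht
  have l₂ {t : ℕ} (ht : t < 5) := hB₂ ▸ hilb_sup_span_singleton_of_lt hom₁ h₁ ht
  have := e₁ 0; have := e₁ 3; have := e₁ 5; have := e₂ 0; have := e₂ 3; have := e₂ 5
  have := e₃ 3; have := e₃ 5
  have := l₁ (t := 0) (by norm_num); have := l₁ (t := 3) (by norm_num)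
  have := l₂ (t := 3) (by norm_num)
  simp only [hilb_bot] at *
  norm_num [Nat.choose] at *
  omega

end HilbertFunction

/-- Example 3.5. There is no ideal `I = (f₁,f₂,f₃,f₄) ⊆ S = k[a,b,c]`
generated by four quintics, with `f₁,f₂,f₃` a regular sequence, such that `S/I` has
Hilbert function `(1,3,6,10,15,17,17,17,15,10,0,0,…)`. -/
theorem stmt8 (k : Type) [Field k] (f : Fin 4 → MvPolynomial (Fin 3) k)
    (hf : ∀ i, (f i).IsHomogeneous 5) (hreg : RegSeq3 (f 0) (f 1) (f 2))
    (hH : ∀ t, hilb k 3 (Ideal.span (Set.range f)) t =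
      [1, 3, 6, 10, 15, 17, 17, 17, 15, 10].getD t 0) :
    False := by
  obtain ⟨hC₈, hC₁₀⟩ := hilb_span_regSeq3_of_quintics (hf 0) (hf 1) (hf 2) hreg
  set C := Ideal.span {f 0, f 1, f 2}
  have hI : Ideal.span (Set.range f) = C ⊔ Ideal.span {f 3} := by
    rw [← Ideal.span_union]
    congr 1
    ext x
    simp [Fin.exists_fin_succ, eq_comm]
    tauto
  have hC : C.IsHomogeneous (homogeneousSubmodule (Fin 3) k) :=
    Ideal.homogeneous_span _ _ (by rintro g (rfl | rfl | rfl) <;> exact ⟨5, hf _⟩)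
  have e₈ := hilb_colon_add_hilb_sup hC (hf 3) 3
  have e₁₀ := hilb_colon_add_hilb_sup hC (hf 3) 5
  rw [← hI, hH] at e₈ e₁₀
  norm_num [hC₈, hC₁₀] at e₈ e₁₀
  have := hilb_eq_zero_of_le e₈ (by norm_num : 3 ≤ 5)
  omega
end

section
/- Numerical consequence of purity (Herzog–Kühl relations): suppose integers 0 = d_0 < d_1 < ... < d_c and positive rationals β_0 = 1, β_1, ..., β_c satisfy ∑_{i=0}^c (−1)^i β_i d_i^s = 0 for all 0 ≤ s ≤ c−1. Then ∑_{i=0}^c (−1)^i β_i d_i^c = (−1)^c ∏_{i=1}^c d_i. -/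
/-!
Let `p = ∏_{i=1}^c (X - d_i)`, a monic polynomial of degree `c`. Pairing `p` with the
functional `q ↦ ∑ (−1)^i β_i q(d_i)`, the relations for `s < c` kill every coefficient of `p`
but the leading one, so the pairing is `∑ (−1)^i β_i d_i^c`. On the other hand `p` vanishes at
`d_1, …, d_c`, so only the term `i = 0` survives, and it is `β_0 p(0) = (−1)^c ∏ d_i`.
-/

open Finset Polynomial Lagrange

theorem Polynomial.sum_mul_eval_eq_coeff_mul_sum_mul_pow {R ι : Type*} [CommRing R]
    (s : Finset ι) (w x : ι → R) {p : R[X]} {n : ℕ} (hp : p.natDegree ≤ n)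
    (h : ∀ j < n, ∑ i ∈ s, w i * x i ^ j = 0) :
    ∑ i ∈ s, w i * p.eval (x i) = p.coeff n * ∑ i ∈ s, w i * x i ^ n := by
  calc ∑ i ∈ s, w i * p.eval (x i)
      = ∑ j ∈ range (n + 1), p.coeff j * ∑ i ∈ s, w i * x i ^ j := by
        simp_rw [eval_eq_sum_range' (Nat.lt_succ_of_le hp), mul_sum]
        rw [sum_comm]
        refine sum_congr rfl fun j _ => sum_congr rfl fun i _ => by ring
    _ = p.coeff n * ∑ i ∈ s, w i * x i ^ n := by
        rw [sum_range_succ, sum_eq_zero fun j hj => by rw [h j (mem_range.mp hj), mul_zero],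
          zero_add]

theorem Lagrange.sum_mul_eval_nodal_erase {R ι : Type*} [CommRing R] [DecidableEq ι]
    {s : Finset ι} {i₀ : ι} (hi₀ : i₀ ∈ s) (w x : ι → R) :
    ∑ i ∈ s, w i * (nodal (s.erase i₀) x).eval (x i) =
      w i₀ * (nodal (s.erase i₀) x).eval (x i₀) :=
  sum_eq_single_of_mem i₀ hi₀ fun i hi hne => by
    rw [eval_nodal_at_node (mem_erase.mpr ⟨hne, hi⟩), mul_zero]

theorem stmt11_general (c : ℕ) (d : ℕ → ℕ) (β : ℕ → ℚ)
    (hd0 : d 0 = 0)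
    (hβ0 : β 0 = 1)
    (hHK : ∀ s < c, ∑ i ∈ Finset.range (c + 1), (-1 : ℚ) ^ i * β i * (d i : ℚ) ^ s = 0) :
    ∑ i ∈ Finset.range (c + 1), (-1 : ℚ) ^ i * β i * (d i : ℚ) ^ c =
      (-1 : ℚ) ^ c * ∏ i ∈ Finset.Icc 1 c, (d i : ℚ) := by
  have hnodes : (range (c + 1)).erase 0 = Icc 1 c := by
    ext i; simp only [mem_erase, mem_range, mem_Icc]; omega
  have hdeg : (nodal ((range (c + 1)).erase 0) fun i => (d i : ℚ)).natDegree = c := by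
    rw [natDegree_nodal, hnodes, Nat.card_Icc, Nat.add_sub_cancel]
  have hpairing := sum_mul_eval_eq_coeff_mul_sum_mul_pow (range (c + 1))
    (fun i => (-1 : ℚ) ^ i * β i) (fun i => (d i : ℚ)) hdeg.le hHK
  have hlead : (nodal ((range (c + 1)).erase 0) fun i => (d i : ℚ)).coeff c = 1 := by
    rw [← nodal_monic.coeff_natDegree, hdeg]
  rw [hlead, one_mul, sum_mul_eval_nodal_erase (by simp)] at hpairing
  rw [← hpairing, eval_nodal, hnodes, hβ0, hd0]
  simp [prod_neg]

/-- Herzog–Kühl relations, numerically. If `0 = d_0 < d_1 < … < d_c`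
are integers and `β_0 = 1, β_1, …, β_c` are positive rationals with
`∑ (−1)^i β_i d_i^s = 0` for `0 ≤ s ≤ c−1`, then
`∑ (−1)^i β_i d_i^c = (−1)^c ∏_{i=1}^c d_i`. -/
theorem stmt11 (c : ℕ) (hc : 1 ≤ c) (d : ℕ → ℕ) (β : ℕ → ℚ)
    (hd0 : d 0 = 0) (hdmono : ∀ i < c, d i < d (i + 1))
    (hβpos : ∀ i ≤ c, 0 < β i) (hβ0 : β 0 = 1)
    (hHK : ∀ s < c, ∑ i ∈ Finset.range (c + 1), (-1 : ℚ) ^ i * β i * (d i : ℚ) ^ s = 0) :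
    ∑ i ∈ Finset.range (c + 1), (-1 : ℚ) ^ i * β i * (d i : ℚ) ^ c =
      (-1 : ℚ) ^ c * ∏ i ∈ Finset.Icc 1 c, (d i : ℚ) :=
  stmt11_general c d β hd0 hβ0 hHK
end
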